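/- Let m > n ≥ 1 be integers and let μ_1 ≥ μ_2 ≥ ⋯ ≥ μ_n = 0 be integers. Then the following are equivalent: (i) there exist s ∈ {1,…,n−1} and integers λ_1 ≥ λ_2 ≥ ⋯ ≥ λ_n such that λ_{n−s} ≥ −s, λ_{n−s+1} + (m−n) ≤ −s, and the value μ_i + λ_{n+1−i} is the same for all i ∈ {1,…,n}; (ii) there exists s ∈ {1,…,n−1} with μ_s − μ_{s+1} ≥ m−n. -/

import Mathlib

/-! Constancy of `μ_i + λ_{n+1-i}` forces `λ` to be the reflection `j ↦ c - μ_{n+1-j}` of `μ`,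
so the gap `λ_{n-s} - λ_{n-s+1}` of `λ` equals the gap `μ_s - μ_{s+1}` of `μ`. The conditions on
`λ` in (i) give this gap at least `m - n`; conversely, if `μ_s - μ_{s+1} ≥ m - n`, the reflection
with `c = μ_{s+1} - s` satisfies them. -/

def reflectSeq (n : ℕ) (c : ℤ) (μ : ℕ → ℤ) (j : ℕ) : ℤ := c - μ (n + 1 - j)

section

variable {n : ℕ} {c : ℤ} {μ : ℕ → ℤ}

lemma reflectSeq_sub_apply {i : ℕ} (hi : i ≤ n + 1) :
    reflectSeq n c μ (n + 1 - i) = c - μ i := by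
  rw [reflectSeq, Nat.sub_sub_self hi]

lemma reflectSeq_antitone (hμ : ∀ i, 1 ≤ i → i < n → μ (i + 1) ≤ μ i) :
    ∀ i, 1 ≤ i → i < n → reflectSeq n c μ (i + 1) ≤ reflectSeq n c μ i := by
  intro i hi hin
  have hmono := hμ (n - i) (by omega) (by omega)
  rw [show n - i + 1 = n + 1 - i by omega] at hmono
  rw [reflectSeq, reflectSeq, show n + 1 - (i + 1) = n - i by omega]
  linarith

lemma add_reflectSeq_sub {i : ℕ} (hi : i ≤ n + 1) : μ i + reflectSeq n c μ (n + 1 - i) = c := by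
  rw [reflectSeq_sub_apply hi]
  ring

lemma sub_succ_eq_of_add_rev_const {lam : ℕ → ℤ} {C : ℤ}
    (hconst : ∀ i, 1 ≤ i → i ≤ n → μ i + lam (n + 1 - i) = C) {s : ℕ} (hs : 1 ≤ s) (hsn : s < n) :
    μ s - μ (s + 1) = lam (n - s) - lam (n - s + 1) := by
  have hat := hconst s hs hsn.le
  have hnext := hconst (s + 1) (by omega) hsn
  rw [show n + 1 - s = n - s + 1 by omega] at hat
  rw [show n + 1 - (s + 1) = n - s by omega] at hnext
  linarith

end

theorem covariants_combinatorial_criterion_general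
    (m n : ℕ) (μ : ℕ → ℤ)
    (hμ : ∀ i, 1 ≤ i → i < n → μ (i + 1) ≤ μ i) :
    (∃ s : ℕ, 1 ≤ s ∧ s ≤ n - 1 ∧
      ∃ lam : ℕ → ℤ,
        (∀ i, 1 ≤ i → i < n → lam (i + 1) ≤ lam i) ∧
        -(s : ℤ) ≤ lam (n - s) ∧
        lam (n - s + 1) + ((m : ℤ) - (n : ℤ)) ≤ -(s : ℤ) ∧
        (∀ i, 1 ≤ i → i ≤ n → μ i + lam (n + 1 - i) = μ 1 + lam n)) ↔
    (∃ s : ℕ, 1 ≤ s ∧ s ≤ n - 1 ∧ (m : ℤ) - (n : ℤ) ≤ μ s - μ (s + 1)) := by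
  constructor
  · rintro ⟨s, hs, hsn, lam, -, hlo, hhi, hconst⟩
    have hgap := sub_succ_eq_of_add_rev_const hconst hs (by omega)
    exact ⟨s, hs, hsn, by linarith⟩
  · rintro ⟨s, hs, hsn, hgap⟩
    have hlo : reflectSeq n (μ (s + 1) - s) μ (n - s) = -s := by
      rw [show n - s = n + 1 - (s + 1) by omega, reflectSeq_sub_apply (by omega)]
      ring
    have hhi : reflectSeq n (μ (s + 1) - s) μ (n - s + 1) = μ (s + 1) - s - μ s := by
      rw [show n - s + 1 = n + 1 - s by omega, reflectSeq_sub_apply (by omega)]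
    have hconst : μ 1 + reflectSeq n (μ (s + 1) - s) μ n = μ (s + 1) - s := by
      simpa using add_reflectSeq_sub (n := n) (c := μ (s + 1) - s) (μ := μ) (i := 1) (by omega)
    refine ⟨s, hs, hsn, reflectSeq n (μ (s + 1) - s) μ, reflectSeq_antitone hμ, hlo.ge,
      by linarith, fun i _ hi => ?_⟩
    rw [add_reflectSeq_sub (by omega), hconst]

/-- The combinatorial core of the characterization of Cohen–Macaulay modules of
covariants: for a partition `μ_1 ≥ ⋯ ≥ μ_n = 0` (indexed by `1, …, n`), there exist
`s ∈ {1, …, n-1}` and a non-increasing integer sequence `λ_1 ≥ ⋯ ≥ λ_n` with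
`λ_{n-s} ≥ -s`, `λ_{n-s+1} + (m-n) ≤ -s`, and `μ_i + λ_{n+1-i}` constant in `i`,
if and only if `μ_s - μ_{s+1} ≥ m - n` for some `s ∈ {1, …, n-1}`. -/
theorem covariants_combinatorial_criterion
    (m n : ℕ) (hn : 1 ≤ n) (hmn : n < m) (μ : ℕ → ℤ)
    (hμ : ∀ i, 1 ≤ i → i < n → μ (i + 1) ≤ μ i) (hμn : μ n = 0) :
    (∃ s : ℕ, 1 ≤ s ∧ s ≤ n - 1 ∧
      ∃ lam : ℕ → ℤ,
        (∀ i, 1 ≤ i → i < n → lam (i + 1) ≤ lam i) ∧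
        -(s : ℤ) ≤ lam (n - s) ∧
        lam (n - s + 1) + ((m : ℤ) - (n : ℤ)) ≤ -(s : ℤ) ∧
        (∀ i, 1 ≤ i → i ≤ n → μ i + lam (n + 1 - i) = μ 1 + lam n)) ↔
    (∃ s : ℕ, 1 ≤ s ∧ s ≤ n - 1 ∧ (m : ℤ) - (n : ℤ) ≤ μ s - μ (s + 1)) :=
  covariants_combinatorial_criterion_general m n μ hμ
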